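/- arXiv:0705.4237 — 4 statements merged into one kernel-verified Lean document; each statement's English description precedes it below -/
import Mathlib

section
/- Let γ ≥ 1, 0 < v₊ < 1, a := v₊^γ (1 - v₊)/(1 - v₊^γ), and h(v) := -v^{γ+1} + a(γ-1) + (a+1)v^γ. Then h(v) > 0 for all v ∈ [v₊, 1]. -/
theorem stmt_8 (γ vp : ℝ) (hγ : 1 ≤ γ) (hv0 : 0 < vp) (hv1 : vp < 1)
    (a : ℝ) (ha : a = vp ^ γ * (1 - vp) / (1 - vp ^ γ))
    (h : ℝ → ℝ) (hh : h = fun v => -v ^ (γ + 1) + a * (γ - 1) + (a + 1) * v ^ γ) :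
    ∀ v ∈ Set.Icc vp 1, 0 < h v := by
  intro v hv
  obtain ⟨hvl, hvr⟩ := hv
  have hvpos : 0 < v := lt_of_lt_of_le hv0 hvl
  have hvg : 0 < v ^ γ := Real.rpow_pos_of_pos hvpos γ
  have hvpγ : vp ^ γ < 1 := by
    calc vp ^ γ ≤ vp ^ (1:ℝ) := Real.rpow_le_rpow_of_exponent_ge hv0 hv1.le hγ
    _ = vp := Real.rpow_one vp
    _ < 1 := hv1
  have hapos : 0 < a := by
    rw [ha]
    exact div_pos (mul_pos (Real.rpow_pos_of_pos hv0 γ) (by linarith)) (by linarith)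
  subst hh
  simp only
  have hsplit : v ^ (γ + 1) = v ^ γ * v := by
    rw [Real.rpow_add hvpos, Real.rpow_one]
  rw [hsplit]
  nlinarith [mul_pos hvg hapos, mul_nonneg hvg.le (by linarith : (0:ℝ) ≤ 1 - v),
    mul_nonneg hapos.le (by linarith : (0:ℝ) ≤ γ - 1)]
end

section
/- Define H(v, v₊) := v(v - 1 + a(v^{-γ} - 1)) with a := v₊^γ(1 - v₊)/(1 - v₊^γ). For γ ≥ 1 and v₊ ≤ v < 1, the identity H(v, v₊) = (v - v₊)·(v - ((1 - v₊)/(1 - v₊^γ))·((1 - (v₊/v)^γ)/(1 - v₊/v))) holds, and consequently (v - γ)(v - v₊) ≤ H(v, v₊) ≤ (v - (1 - v₊))(v - v₊). -/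
/-!
Writing `x = v₊ / v` and `g(x) = (1 - x^γ) / (1 - x)`, one has `(v - v₊) g(x) = v (1 - x^γ)`, and
the definition of `a` makes `H(v, v₊) = (v - v₊) (v - m)` with `m = g(x) / g(v₊)`. Bernoulli's
inequality gives `1 ≤ g ≤ γ` on `[0, 1)`, and `1 - v₊ ≤ 1 / g(v₊) ≤ 1` since `0 < 1 - v₊^γ ≤ 1`,
so `m ∈ [1 - v₊, γ]`; multiplying by `v - v₊ ≥ 0` gives both bounds.
-/

namespace Real

variable {γ x : ℝ}

theorem one_le_one_sub_rpow_div_one_sub (hγ : 1 ≤ γ) (hx0 : 0 ≤ x) (hx1 : x < 1) :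
    1 ≤ (1 - x ^ γ) / (1 - x) := by
  rw [le_div_iff₀ (by linarith)]
  linarith [rpow_le_self_of_le_one hx0 hx1.le hγ]

theorem one_sub_rpow_div_one_sub_le (hγ : 1 ≤ γ) (hx0 : 0 ≤ x) (hx1 : x < 1) :
    (1 - x ^ γ) / (1 - x) ≤ γ := by
  have bernoulli := one_add_mul_self_le_rpow_one_add (s := x - 1) (by linarith) hγ
  rw [add_sub_cancel] at bernoulli
  rw [div_le_iff₀ (by linarith)]
  linarith

end Real

open Real

theorem sub_mul_one_sub_rpow_div_one_sub {v : ℝ} (w γ : ℝ) (hv : v ≠ 0) :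
    (v - w) * ((1 - (w / v) ^ γ) / (1 - w / v)) = v * (1 - (w / v) ^ γ) := by
  rcases eq_or_ne w v with rfl | hwv
  · simp [div_self hv]
  · have hvw : v - w ≠ 0 := sub_ne_zero.2 hwv.symm
    rw [one_sub_div hv]
    field_simp

theorem one_sub_le_one_sub_div_one_sub_rpow {γ vp : ℝ} (hγ : 0 < γ) (hv0 : 0 ≤ vp)
    (hv1 : vp < 1) : 1 - vp ≤ (1 - vp) / (1 - vp ^ γ) := by
  rw [le_div_iff₀ (sub_pos.2 (rpow_lt_one hv0 hv1 hγ))]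
  nlinarith [rpow_nonneg hv0 γ]

theorem one_sub_div_one_sub_rpow_le_one {γ vp : ℝ} (hγ : 1 ≤ γ) (hv0 : 0 ≤ vp)
    (hv1 : vp < 1) : (1 - vp) / (1 - vp ^ γ) ≤ 1 := by
  rw [div_le_one (by linarith [rpow_le_self_of_le_one hv0 hv1.le hγ])]
  linarith [rpow_le_self_of_le_one hv0 hv1.le hγ]

theorem profile_rhs_eq_sub_mul_sub {γ vp v : ℝ} (hv0 : 0 ≤ vp) (hv : 0 < v)
    (hvpγ : vp ^ γ ≠ 1) :
    v * (v - 1 + vp ^ γ * (1 - vp) / (1 - vp ^ γ) * (v ^ (-γ) - 1)) =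
      (v - vp) * (v - (1 - vp) / (1 - vp ^ γ) * ((1 - (vp / v) ^ γ) / (1 - vp / v))) := by
  have key := sub_mul_one_sub_rpow_div_one_sub vp γ hv.ne'
  have hden : 1 - vp ^ γ ≠ 0 := sub_ne_zero.2 hvpγ.symm
  rw [div_rpow hv0 hv.le] at key ⊢
  rw [rpow_neg hv.le]
  generalize (1 - vp ^ γ / v ^ γ) / (1 - vp / v) = g at key ⊢
  linear_combination (norm := skip) (1 - vp) / (1 - vp ^ γ) * key
  field_simp
  ring

theorem stmt_9 (γ vp : ℝ) (hγ : 1 ≤ γ) (hv0 : 0 < vp) (hv1 : vp < 1)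
    (a : ℝ) (ha : a = vp ^ γ * (1 - vp) / (1 - vp ^ γ))
    (H : ℝ → ℝ) (hH : H = fun v => v * (v - 1 + a * (v ^ (-γ) - 1))) :
    ∀ v : ℝ, vp ≤ v → v < 1 →
      H v = (v - vp) * (v - ((1 - vp) / (1 - vp ^ γ)) * ((1 - (vp / v) ^ γ) / (1 - vp / v))) ∧
      (v - γ) * (v - vp) ≤ H v ∧ H v ≤ (v - (1 - vp)) * (v - vp) := by
  intro v hvp _
  subst ha hH
  beta_reduce
  have hv : 0 < v := hv0.trans_le hvp
  have hvpγ : vp ^ γ ≠ 1 := (rpow_le_self_of_le_one hv0.le hv1.le hγ |>.trans_lt hv1).ne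
  have hid := profile_rhs_eq_sub_mul_sub (γ := γ) hv0.le hv hvpγ
  refine ⟨hid, ?_⟩
  rcases hvp.eq_or_lt with rfl | hlt
  · simp [hid]
  have hx1 : vp / v < 1 := (div_lt_one hv).2 hlt
  have hg1 := one_le_one_sub_rpow_div_one_sub hγ (div_pos hv0 hv).le hx1
  have hgγ := one_sub_rpow_div_one_sub_le hγ (div_pos hv0 hv).le hx1
  have hc1 := one_sub_le_one_sub_div_one_sub_rpow (zero_lt_one.trans_le hγ) hv0.le hv1
  have hc2 := one_sub_div_one_sub_rpow_le_one hγ hv0.le hv1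
  rw [hid]
  generalize (1 - vp) / (1 - vp ^ γ) = c at hc1 hc2 ⊢
  generalize (1 - (vp / v) ^ γ) / (1 - vp / v) = g at hg1 hgγ ⊢
  have hm_lo : 1 - vp ≤ c * g := by nlinarith
  have hm_hi : c * g ≤ γ := by nlinarith
  constructor <;> nlinarith
end

section
/- Let γ ≥ 1, 0 < v₊ ≤ 1/12, and H(v, v₊) := v(v - 1 + a(v^{-γ} - 1)) with a := v₊^γ(1 - v₊)/(1 - v₊^γ). Then for all v with v₊ ≤ v ≤ 1/6, one has -γ(v - v₊) ≤ H(v, v₊) ≤ -(3/4)(v - v₊). -/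
theorem stmt_10 (γ vp : ℝ) (hγ : 1 ≤ γ) (hv0 : 0 < vp) (hv12 : vp ≤ 1/12)
    (a : ℝ) (ha : a = vp ^ γ * (1 - vp) / (1 - vp ^ γ))
    (H : ℝ → ℝ) (hH : H = fun v => v * (v - 1 + a * (v ^ (-γ) - 1))) :
    ∀ v : ℝ, vp ≤ v → v ≤ 1/6 →
      -γ * (v - vp) ≤ H v ∧ H v ≤ -(3/4) * (v - vp) := by
  subst ha hH
  intro v hv1 hv2
  have hv : 0 < v := lt_of_lt_of_le hv0 hv1
  set X := vp ^ γ with hXdef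
  set Y := v ^ γ with hYdef
  have hX0 : 0 < X := Real.rpow_pos_of_pos hv0 γ
  have hY0 : 0 < Y := Real.rpow_pos_of_pos hv γ
  have hvp1 : vp ≤ 1 := by linarith
  have hXvp : X ≤ vp := by
    calc X ≤ vp ^ (1:ℝ) := Real.rpow_le_rpow_of_exponent_ge hv0 hvp1 hγ
    _ = vp := Real.rpow_one vp
  have hX1 : 1 - X > 0 := by linarith
  have hXY : X ≤ Y := Real.rpow_le_rpow hv0.le hv1 (by linarith)
  have hvinv : v ^ (-γ) = Y⁻¹ := by rw [Real.rpow_neg hv.le]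
  have hquot : (vp / v) ^ γ = X / Y := Real.div_rpow hv0.le hv.le γ
  set c : ℝ := (1 - vp) / (1 - X) with hcdef
  set w : ℝ := v * (1 - X / Y) with hwdef
  -- bounds on c
  have hc1 : c ≤ 1 := by
    rw [hcdef, div_le_one hX1]; linarith
  have hc2 : 11/12 ≤ c := by
    rw [hcdef, le_div_iff₀ hX1]
    nlinarith
  -- w ≥ 0
  have hw0 : 0 ≤ w := by
    have : X / Y ≤ 1 := by
      rw [div_le_one hY0]; exact hXY
    have := hv.le
    rw [hwdef]; nlinarith
  -- Bernoulli: w ≤ γ * (v - vp)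
  have h1 : w ≤ γ * (v - vp) := by
    have hb : 1 + γ * (vp / v - 1) ≤ (1 + (vp / v - 1)) ^ γ :=
      one_add_mul_self_le_rpow_one_add (by
        have : 0 < vp / v := div_pos hv0 hv
        linarith) hγ
    have h1s : (1 : ℝ) + (vp / v - 1) = vp / v := by ring
    rw [h1s, hquot] at hb
    have : v * (1 + γ * (vp / v - 1)) ≤ v * (X / Y) :=
      mul_le_mul_of_nonneg_left hb hv.le
    have hvv : v * (vp / v) = vp := by field_simp
    rw [hwdef]
    nlinarith [this]
  -- lower: v - vp ≤ w
  have h2 : v - vp ≤ w := by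
    have hr1 : vp / v ≤ 1 := by rw [div_le_one hv]; exact hv1
    have hrq : (vp / v) ^ γ ≤ vp / v := by
      calc (vp / v) ^ γ ≤ (vp / v) ^ (1:ℝ) :=
            Real.rpow_le_rpow_of_exponent_ge (div_pos hv0 hv) hr1 hγ
      _ = vp / v := Real.rpow_one _
    rw [hquot] at hrq
    have : v * (X / Y) ≤ v * (vp / v) := mul_le_mul_of_nonneg_left hrq hv.le
    have hvv : v * (vp / v) = vp := by field_simp
    rw [hwdef]; nlinarith [this]
  -- rewrite H v
  have key : v * (v - 1 + X * (1 - vp) / (1 - X) * (v ^ (-γ) - 1))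
      = v * (v - vp) - c * w := by
    rw [hvinv, hcdef, hwdef]
    field_simp
    ring
  simp only [key]
  have ht : 0 ≤ v - vp := by linarith
  constructor
  · nlinarith [mul_nonneg ht hv.le, mul_le_mul_of_nonneg_right hc1 hw0]
  · nlinarith [mul_le_mul_of_nonneg_left h2 (by linarith : (0:ℝ) ≤ c),
      mul_le_mul_of_nonneg_right hc2 ht, mul_le_mul_of_nonneg_right hv2 ht]
end

section
/- For γ ≥ 1, as v₊ → 1⁻ (so that aγ → 1, where a := v₊^γ(1 - v₊)/(1 - v₊^γ)), the expression (v₊^{γ+1}/(aγ))² + 2(γ-1)(v₊^{γ+1}/(aγ)) - (γ-1) tends to γ; in particular it is eventually positive, so the condition (v₊^{γ+1}/(aγ))² + 2(γ-1)(v₊^{γ+1}/(aγ)) - (γ-1) ≥ 0 holds for all v₊ sufficiently close to 1. -/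
open Filter Set Real

theorem stmt_15 (γ : ℝ) (hγ : 1 ≤ γ) :
    Filter.Tendsto
      (fun vp : ℝ =>
        (vp ^ (γ + 1) / ((vp ^ γ * (1 - vp) / (1 - vp ^ γ)) * γ)) ^ 2
          + 2 * (γ - 1) * (vp ^ (γ + 1) / ((vp ^ γ * (1 - vp) / (1 - vp ^ γ)) * γ))
          - (γ - 1))
      (nhdsWithin 1 (Set.Ioo (0:ℝ) 1)) (nhds γ) ∧
    ∀ᶠ vp : ℝ in nhdsWithin 1 (Set.Ioo (0:ℝ) 1),
      0 ≤ (vp ^ (γ + 1) / ((vp ^ γ * (1 - vp) / (1 - vp ^ γ)) * γ)) ^ 2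
          + 2 * (γ - 1) * (vp ^ (γ + 1) / ((vp ^ γ * (1 - vp) / (1 - vp ^ γ)) * γ))
          - (γ - 1) := by
  have hγ0 : (0:ℝ) < γ := lt_of_lt_of_le one_pos hγ
  set f : ℝ → ℝ := fun vp => vp ^ (γ + 1) / ((vp ^ γ * (1 - vp) / (1 - vp ^ γ)) * γ)
    with hf
  -- derivative of x ↦ x^γ at 1 is γ
  have hderiv : HasDerivAt (fun x : ℝ => x ^ γ) γ 1 := by
    have := Real.hasDerivAt_rpow_const (x := (1:ℝ)) (p := γ) (Or.inl one_ne_zero)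
    simpa using this
  have hslope : Tendsto (fun vp : ℝ => (vp ^ γ - 1) / (vp - 1))
      (nhdsWithin 1 (Set.Ioo (0:ℝ) 1)) (nhds γ) := by
    have h := hasDerivAt_iff_tendsto_slope.mp hderiv
    have hle : nhdsWithin (1:ℝ) (Set.Ioo (0:ℝ) 1) ≤ nhdsWithin 1 {(1:ℝ)}ᶜ :=
      nhdsWithin_mono _ (by intro x hx; exact ne_of_lt hx.2)
    have := h.mono_left hle
    refine this.congr (fun vp => ?_)
    simp only [slope_def_field, Real.one_rpow]
  have hmem : ∀ᶠ vp : ℝ in nhdsWithin 1 (Set.Ioo (0:ℝ) 1), vp ∈ Set.Ioo (0:ℝ) 1 :=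
    eventually_mem_nhdsWithin
  -- f equals vp * ((vp^γ - 1)/(vp - 1)) / γ on Ioo 0 1
  have hfeq : ∀ᶠ vp : ℝ in nhdsWithin 1 (Set.Ioo (0:ℝ) 1),
      f vp = vp * ((vp ^ γ - 1) / (vp - 1)) / γ := by
    filter_upwards [hmem] with vp hvp
    obtain ⟨hv0, hv1⟩ := hvp
    have hpow_pos : (0:ℝ) < vp ^ γ := Real.rpow_pos_of_pos hv0 γ
    have hpow_lt : vp ^ γ < 1 := Real.rpow_lt_one hv0.le hv1 hγ0
    have h1 : vp ^ (γ + 1) = vp ^ γ * vp := by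
      rw [Real.rpow_add hv0, Real.rpow_one]
    have h2 : (1:ℝ) - vp ^ γ ≠ 0 := by linarith
    have h3 : (1:ℝ) - vp ≠ 0 := by linarith
    have h4 : vp - 1 ≠ 0 := by intro h; apply h3; linarith
    simp only [hf, h1]
    field_simp
    ring
  have hfone : Tendsto f (nhdsWithin 1 (Set.Ioo (0:ℝ) 1)) (nhds 1) := by
    have hid : Tendsto (fun vp : ℝ => vp) (nhdsWithin 1 (Set.Ioo (0:ℝ) 1)) (nhds 1) :=
      nhdsWithin_le_nhds
    have := (hid.mul hslope).div_const γ
    have h1 : (1:ℝ) * γ / γ = 1 := by field_simp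
    rw [h1] at this
    exact this.congr' (hfeq.mono fun x h => h.symm)
  have hmain : Tendsto (fun vp : ℝ =>
      (f vp) ^ 2 + 2 * (γ - 1) * (f vp) - (γ - 1))
      (nhdsWithin 1 (Set.Ioo (0:ℝ) 1)) (nhds γ) := by
    have := ((hfone.pow 2).add ((tendsto_const_nhds (x := 2 * (γ - 1))).mul hfone)).sub
      (tendsto_const_nhds (x := γ - 1))
    have harith : (1:ℝ) ^ 2 + 2 * (γ - 1) * 1 - (γ - 1) = γ := by ring
    rwa [harith] at this
  refine ⟨hmain, ?_⟩
  have := hmain.eventually (eventually_gt_nhds hγ0)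
  filter_upwards [this] with vp h
  exact h.le
end
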